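/- arXiv:2401.13608 — 10 statements merged into one kernel-verified Lean document; each statement's English description precedes it below -/
import Mathlib

section
/- Let (A, ·) be a Zinbiel algebra (i.e. a·(b·c) = (b·a+a·b)·c for all a,b,c), let D be a derivation of (A,·), and let ξ, k be scalars. Define a◁b := D(b)·a + ξ b·a, a▷b := a·D(b) + ξ a·b, and a⋄b := k(a·D(b) − D(a)·b + ξ(a·b − b·a)). Then ◁ and ▷ satisfy the pre-Novikov axioms: a▷(b▷c) = (a▷b+a◁b)▷c + b▷(a▷c) − (b▷a+b◁a)▷c; a▷(b◁c) = (a▷b)◁c + b◁(a◁c+a▷c) − (b◁a)◁c; (a◁b+a▷b)▷c = (a▷c)◁b; and (a◁b)◁c = (a◁c)◁b. -/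
theorem stmt0 {k A : Type*} [Field k] [AddCommGroup A] [Module k A]
    (mul : A →ₗ[k] A →ₗ[k] A) (D : A →ₗ[k] A) (ξ κ : k)
    (hZinbiel : ∀ a b c : A, mul a (mul b c) = mul (mul b a + mul a b) c)
    (hDer : ∀ a b : A, D (mul a b) = mul (D a) b + mul a (D b))
    (lhd rhd dia : A → A → A)
    (hlhd : ∀ a b, lhd a b = mul (D b) a + ξ • mul b a)
    (hrhd : ∀ a b, rhd a b = mul a (D b) + ξ • mul a b)
    (hdia : ∀ a b, dia a b = κ • (mul a (D b) - mul (D a) b + ξ • (mul a b - mul b a))) :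
    (∀ a b c, rhd a (rhd b c)
        = rhd (rhd a b + lhd a b) c + rhd b (rhd a c) - rhd (rhd b a + lhd b a) c) ∧
    (∀ a b c, rhd a (lhd b c)
        = lhd (rhd a b) c + lhd b (lhd a c + rhd a c) - lhd (lhd b a) c) ∧
    (∀ a b c, rhd (lhd a b + rhd a b) c = lhd (rhd a c) b) ∧
    (∀ a b c, lhd (lhd a b) c = lhd (lhd a c) b) := by
  refine ⟨fun a b c => ?_, fun a b c => ?_, fun a b c => ?_, fun a b c => ?_⟩ <;>
  · simp only [hlhd, hrhd, map_add, map_smul, LinearMap.add_apply, LinearMap.smul_apply,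
      hDer, hZinbiel]
    module
end

section
/- Let (A, ◁, ▷, ⋄) be a pre-Gel'fand-Dorfman algebra. Define a∘b := a◁b + a▷b and [a,b] := a⋄b − b⋄a. Then (A, ∘, [·,·]) is a Gel'fand-Dorfman algebra: (A,∘) is a Novikov algebra, (A,[·,·]) is a Lie algebra, and the compatibility condition [a∘b,c] − [a∘c,b] + [a,b]∘c − [a,c]∘b − a∘[b,c] = 0 holds for all a,b,c. -/
def IsNovikov {A : Type*} [AddCommGroup A] (circ : A → A → A) : Prop :=
  (∀ a b c : A, circ (circ a b) c - circ a (circ b c) = circ (circ b a) c - circ b (circ a c)) ∧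
  (∀ a b c : A, circ (circ a b) c = circ (circ a c) b)

def IsLieBr {A : Type*} [AddCommGroup A] (br : A → A → A) : Prop :=
  (∀ a b : A, br a b = - br b a) ∧
  (∀ a b c : A, br (br a b) c + br (br b c) a + br (br c a) b = 0)

def IsGD {A : Type*} [AddCommGroup A] (circ br : A → A → A) : Prop :=
  IsNovikov circ ∧ IsLieBr br ∧
  (∀ a b c : A, br (circ a b) c - br (circ a c) b + circ (br a b) c
      - circ (br a c) b - circ a (br b c) = 0)
def IsPreNovikov {A : Type*} [AddCommGroup A] (lhd rhd : A → A → A) : Prop :=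
  (∀ a b c : A, rhd a (rhd b c)
      = rhd (rhd a b + lhd a b) c + rhd b (rhd a c) - rhd (rhd b a + lhd b a) c) ∧
  (∀ a b c : A, rhd a (lhd b c)
      = lhd (rhd a b) c + lhd b (lhd a c + rhd a c) - lhd (lhd b a) c) ∧
  (∀ a b c : A, rhd (lhd a b + rhd a b) c = lhd (rhd a c) b) ∧
  (∀ a b c : A, lhd (lhd a b) c = lhd (lhd a c) b)

def IsPreLie {A : Type*} [AddCommGroup A] (dia : A → A → A) : Prop :=
  ∀ a b c : A, dia (dia a b) c - dia a (dia b c) = dia (dia b a) c - dia b (dia a c)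

def IsPreGD {A : Type*} [AddCommGroup A] (lhd rhd dia : A → A → A) : Prop :=
  IsPreNovikov lhd rhd ∧ IsPreLie dia ∧
  (∀ a b c : A, lhd c (dia a b - dia b a) - dia a (lhd c b) - lhd (dia b c) a
      = - dia b (lhd c a) - lhd (dia a c) b) ∧
  (∀ a b c : A, rhd (dia a b - dia b a) c + dia (lhd a b + rhd a b) c
      = rhd a (dia b c) - dia b (rhd a c) + lhd (dia a c) b)

/-! Every identity of a Gel'fand-Dorfman algebra is, after expanding `a ∘ b = a ◁ b + a ▷ b` and
`[a, b] = a ⋄ b - b ⋄ a` by biadditivity, a signed sum of instances of the pre-Gel'fand-Dorfman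
axioms: the Novikov identities come from the pre-Novikov axioms, the Jacobi identity from
left-symmetry of `⋄` (summed cyclically), and the compatibility condition from the two mixed
axioms. -/

section PreGD

variable {A : Type*} [AddCommGroup A]

theorem IsPreNovikov.isNovikov {lhd rhd : A →+ A →+ A}
    (h : IsPreNovikov (fun a b => lhd a b) (fun a b => rhd a b)) :
    IsNovikov (fun a b => lhd a b + rhd a b) := by
  obtain ⟨N1, N2, N3, N4⟩ := h
  refine ⟨fun a b c => ?_, fun a b c => ?_⟩ <;>
    simp only [map_add, AddMonoidHom.add_apply] at N1 N2 N3 N4 ⊢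
  · linear_combination (norm := abel) -N1 a b c - N2 a b c + N2 b a c
  · linear_combination (norm := abel) N3 a b c - N3 a c b + N4 a b c

theorem IsPreLie.isLieBr_commutator {dia : A →+ A →+ A} (h : IsPreLie (fun a b => dia a b)) :
    IsLieBr (fun a b => dia a b - dia b a) := by
  refine ⟨fun a b => (neg_sub _ _).symm, fun a b c => ?_⟩
  simp only [map_sub, AddMonoidHom.sub_apply]
  linear_combination (norm := abel) h a b c + h b c a + h c a b

theorem IsPreGD.isGD {lhd rhd dia : A →+ A →+ A}
    (h : IsPreGD (fun a b => lhd a b) (fun a b => rhd a b) (fun a b => dia a b)) :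
    IsGD (fun a b => lhd a b + rhd a b) (fun a b => dia a b - dia b a) := by
  obtain ⟨hNov, hLie, C1, C2⟩ := h
  refine ⟨hNov.isNovikov, hLie.isLieBr_commutator, fun a b c => ?_⟩
  simp only [map_add, map_sub, AddMonoidHom.add_apply, AddMonoidHom.sub_apply] at C1 C2 ⊢
  linear_combination (norm := abel) C2 a b c - C2 a c b - C1 b c a

end PreGD

theorem stmt1 {k A : Type*} [Field k] [AddCommGroup A] [Module k A]
    (lhd rhd dia : A →ₗ[k] A →ₗ[k] A)
    (hpre : IsPreGD (fun a b => lhd a b) (fun a b => rhd a b) (fun a b => dia a b)) :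
    IsGD (fun a b : A => lhd a b + rhd a b) (fun a b : A => dia a b - dia b a) :=
  let toBiadditive (f : A →ₗ[k] A →ₗ[k] A) : A →+ A →+ A :=
    LinearMap.toAddMonoidHom'.comp f.toAddMonoidHom
  IsPreGD.isGD (lhd := toBiadditive lhd) (rhd := toBiadditive rhd) (dia := toBiadditive dia) hpre
end

section
/- Let (A, ◁, ▷, ⋄) be a pre-GD algebra and (A, ∘, [·,·]) its associated GD algebra where a∘b = a◁b + a▷b and [a,b] = a⋄b − b⋄a. Then the triple of maps (L_▷, R_◁, L_⋄), where L_▷(a)b = a▷b, R_◁(a)b = b◁a, L_⋄(a)b = a⋄b, makes A a representation of the GD algebra (A, ∘, [·,·]). -/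
def IsGDRep {A V : Type*} [AddCommGroup A] [AddCommGroup V]
    (circ br : A → A → A) (l r ρ : A → V → V) : Prop :=
  (∀ a b v, ρ (br a b) v = ρ a (ρ b v) - ρ b (ρ a v)) ∧
  (∀ a b v, l (circ a b - circ b a) v = l a (l b v) - l b (l a v)) ∧
  (∀ a b v, l a (r b v) - r b (l a v) = r (circ a b) v - r b (r a v)) ∧
  (∀ a b v, l (circ a b) v = r b (l a v)) ∧
  (∀ a b v, r a (r b v) = r b (r a v)) ∧
  (∀ a b v, ρ a (l b v) + ρ (circ b a) v + l (br b a) v - r a (ρ b v) - l b (ρ a v) = 0) ∧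
  (∀ a b v, ρ a (r b v) - ρ b (r a v) - r b (ρ a v) + r a (ρ b v) - r (br a b) v = 0)
theorem stmt2 {k A : Type*} [Field k] [AddCommGroup A] [Module k A]
    (lhd rhd dia : A →ₗ[k] A →ₗ[k] A)
    (hpre : IsPreGD (fun a b => lhd a b) (fun a b => rhd a b) (fun a b => dia a b)) :
    IsGDRep (fun a b : A => lhd a b + rhd a b) (fun a b : A => dia a b - dia b a)
      (fun a v => rhd a v) (fun a v => lhd v a) (fun a v => dia a v) := by
  obtain ⟨⟨N1, N2, N3, N4⟩, PL, C1, C2⟩ := hpre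
  refine ⟨?_, ?_, ?_, ?_, ?_, ?_, ?_⟩
  · intro a b v
    have h := PL a b v
    simp only [map_add, map_sub, LinearMap.add_apply, LinearMap.sub_apply] at h ⊢
    rw [← sub_eq_zero] at h ⊢
    abel_nf at h ⊢
    exact h
  · intro a b v
    have h := (N1 a b v).symm
    simp only [map_add, map_sub, LinearMap.add_apply, LinearMap.sub_apply] at h ⊢
    rw [← sub_eq_zero] at h ⊢
    abel_nf at h ⊢
    exact h
  · intro a b v
    have h := N2 a v b
    simp only [map_add, map_sub, LinearMap.add_apply, LinearMap.sub_apply] at h ⊢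
    rw [← sub_eq_zero] at h ⊢
    abel_nf at h ⊢
    exact h
  · intro a b v
    have h := N3 a b v
    simp only [map_add, map_sub, LinearMap.add_apply, LinearMap.sub_apply] at h ⊢
    rw [← sub_eq_zero] at h ⊢
    abel_nf at h ⊢
    exact h
  · intro a b v
    have h := N4 v b a
    simp only [map_add, map_sub, LinearMap.add_apply, LinearMap.sub_apply] at h ⊢
    rw [← sub_eq_zero] at h ⊢
    abel_nf at h ⊢
    exact h
  · intro a b v
    have h := C2 b a v
    simp only [map_add, map_sub, map_neg, LinearMap.add_apply, LinearMap.sub_apply] at h ⊢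
    rw [← sub_eq_zero] at h
    abel_nf at h ⊢
    exact h
  · intro a b v
    have h := (C1 a b v).symm
    simp only [map_add, map_sub, map_neg, LinearMap.add_apply, LinearMap.sub_apply] at h ⊢
    rw [← sub_eq_zero] at h
    abel_nf at h ⊢
    exact h
end

section
/- Let (A, ∘, [·,·]) be a GD algebra, V a vector space, and l, r, ρ: A → End(V) linear maps. Define on the direct sum A ⊕ V the operations (a+u)•(b+v) := a∘b + l(a)v + r(b)u and [a+u, b+v] := [a,b] + ρ(a)v − ρ(b)u. Then (A⊕V, •, [·,·]) is a GD algebra if and only if (V, l, r, ρ) is a representation of (A, ∘, [·,·]). -/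
set_option maxHeartbeats 1000000 in
theorem stmt3 {k A V : Type*} [Field k] [AddCommGroup A] [Module k A]
    [AddCommGroup V] [Module k V]
    (circ br : A →ₗ[k] A →ₗ[k] A)
    (hA : IsGD (fun a b => circ a b) (fun a b => br a b))
    (l r ρ : A →ₗ[k] V →ₗ[k] V) :
    IsGD (A := A × V)
      (fun p q => (circ p.1 q.1, l p.1 q.2 + r q.1 p.2))
      (fun p q => (br p.1 q.1, ρ p.1 q.2 - ρ q.1 p.2))
    ↔ IsGDRep (fun a b => circ a b) (fun a b => br a b)
        (fun a v => l a v) (fun a v => r a v) (fun a v => ρ a v) := by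
  obtain ⟨⟨An1, An2⟩, ⟨Ask, Ajac⟩, Ac⟩ := hA
  constructor
  · rintro ⟨⟨hn1, hn2⟩, ⟨hsk, hjac⟩, hc⟩
    refine ⟨?_, ?_, ?_, ?_, ?_, ?_, ?_⟩ <;> intro a b v
    · have h := congrArg Prod.snd (hjac (a,0) (b,0) (0,v))
      simp at h
      linear_combination (norm := abel) h
    · have h := congrArg Prod.snd (hn1 (a,0) (b,0) (0,v))
      simp [map_sub] at h ⊢
      linear_combination (norm := abel) h
    · have h := congrArg Prod.snd (hn1 (a,0) (0,v) (b,0))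
      simp at h
      linear_combination (norm := abel) -h
    · have h := congrArg Prod.snd (hn2 (a,0) (0,v) (b,0))
      simp at h
      linear_combination (norm := abel) -h
    · have h := congrArg Prod.snd (hn2 (0,v) (a,0) (b,0))
      simp at h
      linear_combination (norm := abel) -h
    · have h := congrArg Prod.snd (hc (b,0) (a,0) (0,v))
      simp at h
      linear_combination (norm := abel) h
    · have h := congrArg Prod.snd (hc (0,v) (a,0) (b,0))
      simp at h
      linear_combination (norm := abel) h
  · rintro ⟨h1, h2, h3, h4, h5, h6, h7⟩
    have e2 : ∀ (a b : A) (w : V),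
        l (circ a b) w - l (circ b a) w = l a (l b w) - l b (l a w) := by
      intro a b w
      have h := h2 a b w
      simpa [map_sub] using h
    refine ⟨⟨?_, ?_⟩, ⟨?_, ?_⟩, ?_⟩
    · rintro ⟨a,u⟩ ⟨b,v⟩ ⟨c,w⟩
      refine Prod.ext ?_ ?_
      · simpa using An1 a b c
      · simp only [Prod.fst_sub, Prod.snd_sub, Prod.fst_add, Prod.snd_add, map_add, map_sub]
        linear_combination (norm := abel) e2 a b w - h3 a c v + h3 b c u
    · rintro ⟨a,u⟩ ⟨b,v⟩ ⟨c,w⟩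
      refine Prod.ext ?_ ?_
      · simpa using An2 a b c
      · simp only [Prod.fst_sub, Prod.snd_sub, Prod.fst_add, Prod.snd_add, map_add, map_sub]
        linear_combination (norm := abel) h4 a b w - h4 a c v + h5 c b u
    · rintro ⟨a,u⟩ ⟨b,v⟩
      refine Prod.ext ?_ ?_
      · simpa using Ask a b
      · simp only [Prod.snd_neg, Prod.fst_neg]
        abel
    · rintro ⟨a,u⟩ ⟨b,v⟩ ⟨c,w⟩
      refine Prod.ext ?_ ?_
      · simpa using Ajac a b c
      · simp only [Prod.fst_sub, Prod.snd_sub, Prod.fst_add, Prod.snd_add, Prod.snd_zero,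
          map_add, map_sub, map_neg]
        linear_combination (norm := abel) h1 a b w + h1 b c u + h1 c a v
    · rintro ⟨a,u⟩ ⟨b,v⟩ ⟨c,w⟩
      refine Prod.ext ?_ ?_
      · simpa using Ac a b c
      · simp only [Prod.fst_sub, Prod.snd_sub, Prod.fst_add, Prod.snd_add, Prod.snd_zero,
          map_add, map_sub, map_neg]
        linear_combination (norm := abel) h6 b a w - h6 c a v + h7 b c u
end

section
/- Let (A, ∘, [·,·]) be a finite-dimensional GD algebra and (V, l, r, ρ) a representation. Then (V*, l* + r*, −r*, ρ*) is a representation of (A, ∘, [·,·]), where for a linear map φ: A → End(V) the map φ*: A → End(V*) is defined by ⟨φ*(a)f, u⟩ = −⟨f, φ(a)u⟩. -/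
theorem stmt4 {k A V : Type*} [Field k] [AddCommGroup A] [Module k A] [FiniteDimensional k A]
    [AddCommGroup V] [Module k V]
    (circ br : A →ₗ[k] A →ₗ[k] A)
    (hA : IsGD (fun a b => circ a b) (fun a b => br a b))
    (l r ρ : A →ₗ[k] V →ₗ[k] V)
    (hrep : IsGDRep (fun a b => circ a b) (fun a b => br a b)
      (fun a v => l a v) (fun a v => r a v) (fun a v => ρ a v)) :
    IsGDRep (fun a b => circ a b) (fun a b => br a b)
      (fun a (f : Module.Dual k V) => -(f ∘ₗ l a) - (f ∘ₗ r a))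
      (fun a (f : Module.Dual k V) => (f ∘ₗ r a))
      (fun a (f : Module.Dual k V) => -(f ∘ₗ ρ a)) := by
  obtain ⟨h1, h2, h3, h4, h5, h6, h7⟩ := hrep
  simp only at h1 h2 h3 h4 h5 h6 h7
  refine ⟨?_, ?_, ?_, ?_, ?_, ?_, ?_⟩ <;> intro a b f <;> ext v <;>
    simp only [LinearMap.sub_apply, LinearMap.neg_apply, LinearMap.add_apply,
      LinearMap.comp_apply, LinearMap.zero_apply, map_sub, map_add, map_neg]
  · -- Lie rep
    have H := congrArg f (h1 a b v)
    simp only [map_sub] at H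
    linear_combination -H
  · -- l condition
    have H2 := congrArg f (h2 a b v)
    have H2' := congrArg f (h2 b a v)
    have H4 := congrArg f (h4 a b v)
    have H4' := congrArg f (h4 b a v)
    have H3 := congrArg f (h3 a b v)
    have H3' := congrArg f (h3 b a v)
    have H5 := congrArg f (h5 a b v)
    simp only [map_sub, LinearMap.sub_apply] at H2 H2' H4 H4' H3 H3' H5
    linear_combination -H2 + H3 - H3' + 2*H5
  · -- l-r condition
    have H3 := congrArg f (h3 a b v)
    have H5 := congrArg f (h5 a b v)
    simp only [map_sub] at H3 H5
    linear_combination H3 + 2*H5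
  · -- l(circ) condition
    have H4 := congrArg f (h4 a b v)
    have H3 := congrArg f (h3 a b v)
    have H5 := congrArg f (h5 a b v)
    simp only [map_sub] at H4 H3 H5
    linear_combination -H4 + H3 + H5
  · -- r commute
    have H5 := congrArg f (h5 b a v)
    linear_combination H5
  · -- sixth
    have H6 := congrArg f (h6 a b v)
    have H7 := congrArg f (h7 b a v)
    simp only [map_sub, map_add, map_zero] at H6 H7
    linear_combination -H6 + H7
  · -- seventh
    have H7 := congrArg f (h7 a b v)
    simp only [map_sub, map_add, map_zero] at H7
    linear_combination H7
end

section
/- Let A be the 2-dimensional vector space with basis e₁, e₂ and Novikov product given by e₁∘e₁ = e₂∘e₁ = e₂∘e₂ = 0, e₁∘e₂ = e₂. Define δ₀: A → A⊗A by δ₀(e₁) = 0, δ₀(e₂) = e₁⊗e₂ − e₂⊗e₁. Then (A, δ₀) is a Lie coalgebra and δ₀(b∘a) = (R_∘(a)⊗id)δ₀(b) + (L_∘(b)⊗id)δ₀(a) + (id⊗L_⋆(b))δ₀(a) for all a, b ∈ A, i.e. (A, ∘, δ₀) is a GD bialgebra of Novikov type. -/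
open scoped TensorProduct

noncomputable def tau (k A : Type*) [Field k] [AddCommGroup A] [Module k A] :
    A ⊗[k] A →ₗ[k] A ⊗[k] A := (TensorProduct.comm k A A).toLinearMap

noncomputable def asr (k A : Type*) [Field k] [AddCommGroup A] [Module k A] :
    (A ⊗[k] A) ⊗[k] A →ₗ[k] A ⊗[k] (A ⊗[k] A) := (TensorProduct.assoc k A A A).toLinearMap

noncomputable def m12 (k A : Type*) [Field k] [AddCommGroup A] [Module k A] :
    A ⊗[k] (A ⊗[k] A) →ₗ[k] A ⊗[k] (A ⊗[k] A) :=
  (asr k A) ∘ₗ (TensorProduct.map (tau k A) (LinearMap.id : A →ₗ[k] A)) ∘ₗ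
    (TensorProduct.assoc k A A A).symm.toLinearMap

/-- The Novikov coalgebra axioms. -/
def IsNovikovCo {k A : Type*} [Field k] [AddCommGroup A] [Module k A]
    (Δ : A →ₗ[k] A ⊗[k] A) : Prop :=
  (∀ a : A,
    TensorProduct.map (LinearMap.id : A →ₗ[k] A) Δ (Δ a)
      - m12 k A (TensorProduct.map (LinearMap.id : A →ₗ[k] A) Δ (Δ a))
    = asr k A (TensorProduct.map Δ (LinearMap.id : A →ₗ[k] A) (Δ a))
      - m12 k A (asr k A (TensorProduct.map Δ (LinearMap.id : A →ₗ[k] A) (Δ a)))) ∧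
  (∀ a : A,
    m12 k A (TensorProduct.map (LinearMap.id : A →ₗ[k] A) Δ (tau k A (Δ a)))
    = asr k A (TensorProduct.map Δ (LinearMap.id : A →ₗ[k] A) (Δ a)))

/-- The Lie coalgebra axioms. -/
def IsLieCo {k A : Type*} [Field k] [AddCommGroup A] [Module k A]
    (δ : A →ₗ[k] A ⊗[k] A) : Prop :=
  (∀ a : A, δ a = - tau k A (δ a)) ∧
  (∀ a : A,
    TensorProduct.map (LinearMap.id : A →ₗ[k] A) δ (δ a)
      - m12 k A (TensorProduct.map (LinearMap.id : A →ₗ[k] A) δ (δ a))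
    = asr k A (TensorProduct.map δ (LinearMap.id : A →ₗ[k] A) (δ a)))

/-- The compatibility condition between the Novikov cooperation and the Lie cooperation
in a Gel'fand-Dorfman coalgebra. -/
def GDCoCompat {k A : Type*} [Field k] [AddCommGroup A] [Module k A]
    (Δ δ : A →ₗ[k] A ⊗[k] A) : Prop :=
  ∀ a : A,
    TensorProduct.map (LinearMap.id : A →ₗ[k] A) δ (Δ a)
      - m12 k A (TensorProduct.map (LinearMap.id : A →ₗ[k] A) Δ (δ a))
      + m12 k A (TensorProduct.map (LinearMap.id : A →ₗ[k] A) δ (tau k A (Δ a)))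
    = asr k A (TensorProduct.map Δ (LinearMap.id : A →ₗ[k] A) (δ a))
      + asr k A (TensorProduct.map δ (LinearMap.id : A →ₗ[k] A) (Δ a))

def IsGDCoalgebra {k A : Type*} [Field k] [AddCommGroup A] [Module k A]
    (Δ δ : A →ₗ[k] A ⊗[k] A) : Prop :=
  IsNovikovCo Δ ∧ IsLieCo δ ∧ GDCoCompat Δ δ
/-- The Novikov product on `k²` with `e₁ ∘ e₂ = e₂` and all other products of
basis vectors zero. -/
noncomputable def circ5 (k : Type*) [Field k] : (k × k) →ₗ[k] (k × k) →ₗ[k] (k × k) :=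
  LinearMap.mk₂ k (fun a b => ((0 : k), a.1 * b.2))
    (by intro m₁ m₂ n; simp [Prod.ext_iff, add_mul])
    (by intro c m n; simp [Prod.ext_iff, smul_eq_mul]; ring)
    (by intro m n₁ n₂; simp [Prod.ext_iff, mul_add])
    (by intro c m n; simp [Prod.ext_iff, smul_eq_mul]; ring)

/-- `δ₀(e₁) = 0`, `δ₀(e₂) = e₁ ⊗ e₂ - e₂ ⊗ e₁`. -/
noncomputable def delta5 (k : Type*) [Field k] : (k × k) →ₗ[k] (k × k) ⊗[k] (k × k) :=
  (LinearMap.snd k k k).smulRight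
    (((1, 0) : k × k) ⊗ₜ[k] ((0, 1) : k × k) - ((0, 1) : k × k) ⊗ₜ[k] ((1, 0) : k × k))

theorem stmt5 (k : Type*) [Field k] :
    IsNovikov (fun a b : k × k => circ5 k a b) ∧
    IsLieCo (delta5 k) ∧
    (∀ a b : k × k,
      delta5 k (circ5 k b a)
        = TensorProduct.map ((circ5 k).flip a) (LinearMap.id : (k × k) →ₗ[k] k × k)
            (delta5 k b)
          + TensorProduct.map (circ5 k b) (LinearMap.id : (k × k) →ₗ[k] k × k)
            (delta5 k a)
          + TensorProduct.map (LinearMap.id : (k × k) →ₗ[k] k × k)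
            (circ5 k b + (circ5 k).flip b) (delta5 k a)) := by
  refine ⟨⟨fun a b c => by simp [circ5, Prod.ext_iff]; ring, fun a b c => by simp [circ5, Prod.ext_iff]⟩, ⟨fun a => by simp [delta5, tau, TensorProduct.comm_tmul, smul_sub], fun a => ?_⟩, fun a b => ?_⟩
  · simp only [delta5, m12, asr, tau, LinearMap.smulRight_apply, LinearMap.snd_apply,
      LinearMap.coe_comp, Function.comp_apply, LinearEquiv.coe_coe, map_sub, map_smul,
      TensorProduct.map_tmul, LinearMap.id_apply, smul_sub, TensorProduct.tmul_sub,
      TensorProduct.sub_tmul, TensorProduct.assoc_tmul, TensorProduct.assoc_symm_tmul,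
      TensorProduct.comm_tmul, TensorProduct.smul_tmul', TensorProduct.tmul_smul]
    simp only [TensorProduct.smul_tmul, TensorProduct.tmul_smul, smul_smul]
    module
  · simp only [delta5, circ5, LinearMap.smulRight_apply, LinearMap.snd_apply,
      LinearMap.mk₂_apply, LinearMap.flip_apply, LinearMap.add_apply, map_smul,
      TensorProduct.map_tmul, LinearMap.id_apply, smul_sub, map_sub,
      TensorProduct.tmul_sub, TensorProduct.sub_tmul]
    simp only [LinearMap.mk₂_apply, mul_one, mul_zero, one_mul, zero_mul]
    have h1 : ((0, a.2) : k × k) = a.2 • ((0,1) : k × k) := by simp [Prod.ext_iff]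
    have h2 : ((0, b.1) : k × k) = b.1 • ((0,1) : k × k) := by simp [Prod.ext_iff]
    have h3 : ((0, b.2) : k × k) = b.2 • ((0,1) : k × k) := by simp [Prod.ext_iff]
    have h4 : ((0, 0) : k × k) = (0 : k × k) := rfl
    rw [h1, h2, h3, h4]
    simp only [TensorProduct.smul_tmul, TensorProduct.tmul_smul, smul_smul,
      TensorProduct.zero_tmul, TensorProduct.tmul_zero, smul_zero, add_zero, zero_add]
    module
end

section
/- Let (A, ∘, [·,·]) be a GD algebra, (V, l, r, ρ) a representation, and T: V → A a linear map satisfying T(u)∘T(v) = T(l(T(u))v + r(T(v))u) and [T(u),T(v)] = T(ρ(T(u))v − ρ(T(v))u) for all u,v ∈ V (an O-operator). Then the products u▷v := l(T(u))v, u◁v := r(T(v))u, u⋄v := ρ(T(u))v define a pre-GD algebra structure on V. -/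
theorem stmt8 {k A V : Type*} [Field k] [AddCommGroup A] [Module k A]
    [AddCommGroup V] [Module k V]
    (circ br : A →ₗ[k] A →ₗ[k] A)
    (hGD : IsGD (fun a b => circ a b) (fun a b => br a b))
    (l r ρ : A →ₗ[k] V →ₗ[k] V)
    (hrep : IsGDRep (fun a b => circ a b) (fun a b => br a b)
      (fun a v => l a v) (fun a v => r a v) (fun a v => ρ a v))
    (T : V →ₗ[k] A)
    (hT1 : ∀ u v, circ (T u) (T v) = T (l (T u) v + r (T v) u))
    (hT2 : ∀ u v, br (T u) (T v) = T (ρ (T u) v - ρ (T v) u)) :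
    IsPreGD (fun u v : V => r (T v) u) (fun u v : V => l (T u) v)
      (fun u v : V => ρ (T u) v) := by
  have k1 : ∀ a b (v : V), ρ (br a b) v = ρ a (ρ b v) - ρ b (ρ a v) :=
    fun a b v => hrep.1 a b v
  have k2 : ∀ a b (v : V), l (circ a b) v - l (circ b a) v = l a (l b v) - l b (l a v) := by
    intro a b v
    have := hrep.2.1 a b v
    simpa [map_sub] using this
  have k3 : ∀ a b (v : V), l a (r b v) - r b (l a v) = r (circ a b) v - r b (r a v) :=
    fun a b v => hrep.2.2.1 a b v
  have k4 : ∀ a b (v : V), l (circ a b) v = r b (l a v) := fun a b v => hrep.2.2.2.1 a b v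
  have k5 : ∀ a b (v : V), r a (r b v) = r b (r a v) := fun a b v => hrep.2.2.2.2.1 a b v
  have k6 : ∀ a b (v : V), ρ a (l b v) + ρ (circ b a) v + l (br b a) v - r a (ρ b v)
      - l b (ρ a v) = 0 := fun a b v => hrep.2.2.2.2.2.1 a b v
  have k7 : ∀ a b (v : V), ρ a (r b v) - ρ b (r a v) - r b (ρ a v) + r a (ρ b v)
      - r (br a b) v = 0 := fun a b v => hrep.2.2.2.2.2.2 a b v
  refine ⟨⟨?_, ?_, ?_, ?_⟩, ?_, ?_, ?_⟩
  · intro a b c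
    show l (T a) (l (T b) c)
        = l (T (l (T a) b + r (T b) a)) c + l (T b) (l (T a) c) - l (T (l (T b) a + r (T a) b)) c
    rw [← hT1 a b, ← hT1 b a]
    have key := sub_eq_zero.mpr (k2 (T a) (T b) c)
    first
    | (refine sub_eq_zero.mp ?_; rw [← key]; abel1)
    | (refine (sub_eq_zero.mp ?_).symm; rw [← key]; abel1)
  · intro a b c
    show l (T a) (r (T c) b)
        = r (T c) (l (T a) b) + r (T (r (T c) a + l (T a) c)) b - r (T c) (r (T a) b)
    rw [add_comm (r (T c) a) (l (T a) c), ← hT1 a c]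
    have key := sub_eq_zero.mpr (k3 (T a) (T c) b)
    first
    | (refine sub_eq_zero.mp ?_; rw [← key]; abel1)
    | (refine (sub_eq_zero.mp ?_).symm; rw [← key]; abel1)
  · intro a b c
    show l (T (r (T b) a + l (T a) b)) c = r (T b) (l (T a) c)
    rw [add_comm (r (T b) a) (l (T a) b), ← hT1 a b]
    exact k4 (T a) (T b) c
  · intro a b c
    show r (T c) (r (T b) a) = r (T b) (r (T c) a)
    exact k5 (T c) (T b) a
  · intro a b c
    show ρ (T (ρ (T a) b)) c - ρ (T a) (ρ (T b) c)
        = ρ (T (ρ (T b) a)) c - ρ (T b) (ρ (T a) c)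
    have key := k1 (T a) (T b) c
    rw [hT2 a b] at key
    simp only [map_sub, LinearMap.sub_apply] at key
    have key' := sub_eq_zero.mpr key
    first
    | (refine sub_eq_zero.mp ?_; rw [← key']; abel1)
    | (refine (sub_eq_zero.mp ?_).symm; rw [← key']; abel1)
  · intro a b c
    show r (T (ρ (T a) b - ρ (T b) a)) c - ρ (T a) (r (T b) c) - r (T a) (ρ (T b) c)
        = - ρ (T b) (r (T a) c) - r (T b) (ρ (T a) c)
    rw [← hT2 a b]
    have key := k7 (T a) (T b) c
    first
    | (refine sub_eq_zero.mp ?_; rw [← key]; abel1)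
    | (refine (sub_eq_zero.mp ?_).symm; rw [← key]; abel1)
  · intro a b c
    show l (T (ρ (T a) b - ρ (T b) a)) c + ρ (T (r (T b) a + l (T a) b)) c
        = l (T a) (ρ (T b) c) - ρ (T b) (l (T a) c) + r (T b) (ρ (T a) c)
    rw [← hT2 a b, add_comm (r (T b) a) (l (T a) b), ← hT1 a b]
    have key := k6 (T b) (T a) c
    first
    | (refine sub_eq_zero.mp ?_; rw [← key]; abel1)
    | (refine (sub_eq_zero.mp ?_).symm; rw [← key]; abel1)
end

section
/- Let A be a vector space with three bilinear operations ▷, ◁, ⋄. Suppose that (A, ∘, [·,·]) defined by a∘b := a◁b + a▷b and [a,b] := a⋄b − b⋄a is a GD algebra and that (A, L_▷, R_◁, L_⋄) is a representation of this GD algebra. Then (A, ◁, ▷, ⋄) is a pre-GD algebra. -/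
theorem stmt10 {k A : Type*} [Field k] [AddCommGroup A] [Module k A]
    (lhd rhd dia : A →ₗ[k] A →ₗ[k] A)
    (hGD : IsGD (fun a b : A => lhd a b + rhd a b) (fun a b : A => dia a b - dia b a))
    (hrep : IsGDRep (fun a b : A => lhd a b + rhd a b) (fun a b : A => dia a b - dia b a)
      (fun a v => rhd a v) (fun a v => lhd v a) (fun a v => dia a v)) :
    IsPreGD (fun a b => lhd a b) (fun a b => rhd a b) (fun a b => dia a b) := by
  obtain ⟨h1, h2, h3, h4, h5, h6, h7⟩ := hrep
  simp only [map_sub, map_add, LinearMap.sub_apply, LinearMap.add_apply] at h1 h2 h3 h4 h5 h6 h7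
  refine ⟨⟨?_, ?_, ?_, ?_⟩, ?_, ?_, ?_⟩
  · intro a b c
    have h := h2 a b c
    simp only [map_add, LinearMap.add_apply]
    first
    | linear_combination (norm := module) h
    | linear_combination (norm := module) (-1 : k) • h
  · intro a b c
    have h := h3 a c b
    simp only [map_add, LinearMap.add_apply]
    first
    | linear_combination (norm := module) h
    | linear_combination (norm := module) (-1 : k) • h
  · intro a b c
    have h := h4 a b c
    simp only [map_add, LinearMap.add_apply]
    first
    | linear_combination (norm := module) h
    | linear_combination (norm := module) (-1 : k) • h
  · intro a b c
    have h := h5 c b a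
    simp only []
    first
    | linear_combination (norm := module) h
    | linear_combination (norm := module) (-1 : k) • h
  · intro a b c
    have h := h1 a b c
    simp only []
    first
    | linear_combination (norm := module) h
    | linear_combination (norm := module) (-1 : k) • h
  · intro a b c
    have h := h7 a b c
    simp only [map_sub, LinearMap.sub_apply]
    first
    | linear_combination (norm := module) h
    | linear_combination (norm := module) (-1 : k) • h
  · intro a b c
    have h := h6 b a c
    simp only [map_sub, map_add, LinearMap.sub_apply, LinearMap.add_apply]
    first
    | linear_combination (norm := module) h
    | linear_combination (norm := module) (-1 : k) • h
end

section
/- Let ξ, k be scalars and let A = span(e₁,e₂,e₃) with products ∘ and [·,·] given by the nonzero relations e₁∘e₁ = (2+2ξ)e₂, e₁∘e₂ = (4+2ξ)e₃, e₂∘e₁ = (2+2ξ)e₃, and [e₁,e₂] = 2k e₃ = −[e₂,e₁]. Then (A, ∘, [·,·]) is a GD algebra. -/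
/-!
In coordinates, `a ∘ b` has no `e₁`-component and `[a, b]` is a multiple of `e₃`, while `e₃`
annihilates `∘` on both sides and is central. Hence every product of three elements involving the
bracket vanishes, and the remaining triple products `(a ∘ b) ∘ c`, `a ∘ (b ∘ c)` and
`[a ∘ b, c]` are all scalar multiples of `a₁ b₁ c₁ e₃`, which is symmetric in `a, b, c`.
Each GD identity is then a cancellation of equal terms.
-/

namespace GDExample

variable {k : Type*} [CommRing k]

def circ (ξ : k) (a b : k × k × k) : k × k × k :=
  (0, (2 + 2 * ξ) * (a.1 * b.1), (4 + 2 * ξ) * (a.1 * b.2.1) + (2 + 2 * ξ) * (a.2.1 * b.1))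

def br (κ : k) (a b : k × k × k) : k × k × k :=
  (0, 0, 2 * κ * (a.1 * b.2.1 - a.2.1 * b.1))

section

variable (ξ κ : k) (a b c : k × k × k)

theorem circ_circ_left :
    circ ξ (circ ξ a b) c = (0, 0, (2 + 2 * ξ) ^ 2 * (a.1 * b.1 * c.1)) := by
  ext <;> simp [circ]; ring

theorem circ_circ_right :
    circ ξ a (circ ξ b c) = (0, 0, (4 + 2 * ξ) * (2 + 2 * ξ) * (a.1 * b.1 * c.1)) := by
  ext <;> simp [circ]; ring

theorem br_circ_left :
    br κ (circ ξ a b) c = (0, 0, -(2 * κ * (2 + 2 * ξ)) * (a.1 * b.1 * c.1)) := by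
  ext <;> simp [circ, br]; ring

theorem circ_br_left : circ ξ (br κ a b) c = 0 := by
  ext <;> simp [circ, br]

theorem circ_br_right : circ ξ a (br κ b c) = 0 := by
  ext <;> simp [circ, br]

theorem br_br_left : br κ (br κ a b) c = 0 := by
  ext <;> simp [br]

theorem br_comm : br κ a b = -br κ b a := by
  ext <;> simp [br]; ring

end

theorem isNovikov_circ (ξ : k) : IsNovikov (circ ξ) := by
  refine ⟨fun a b c => ?_, fun a b c => ?_⟩
  · rw [circ_circ_left, circ_circ_right, circ_circ_left, circ_circ_right, mul_comm b.1 a.1]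
  · rw [circ_circ_left, circ_circ_left, mul_right_comm]

theorem isLieBr_br (κ : k) : IsLieBr (br κ) :=
  ⟨br_comm κ, fun a b c => by rw [br_br_left, br_br_left, br_br_left, add_zero, add_zero]⟩

theorem isGD_circ_br (ξ κ : k) : IsGD (circ ξ) (br κ) := by
  refine ⟨isNovikov_circ ξ, isLieBr_br κ, fun a b c => ?_⟩
  rw [br_circ_left, br_circ_left, circ_br_left, circ_br_left, circ_br_right, mul_right_comm a.1,
    sub_self, sub_zero, sub_zero, add_zero]

end GDExample

theorem stmt12 {k : Type*} [Field k] (ξ κ : k)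
    (circ br : (k × k × k) → (k × k × k) → (k × k × k))
    (hcirc : ∀ a b, circ a b
      = (0, (2 + 2 * ξ) * (a.1 * b.1),
          (4 + 2 * ξ) * (a.1 * b.2.1) + (2 + 2 * ξ) * (a.2.1 * b.1)))
    (hbr : ∀ a b, br a b = (0, 0, 2 * κ * (a.1 * b.2.1 - a.2.1 * b.1))) :
    IsGD circ br := by
  obtain rfl : circ = GDExample.circ ξ := funext₂ hcirc
  obtain rfl : br = GDExample.br κ := funext₂ hbr
  exact GDExample.isGD_circ_br ξ κ
end

section
/- Let (A, ∘, [·,·]) be a finite-dimensional GD algebra and r = Σ xᵢ⊗yᵢ ∈ A⊗A skew-symmetric (τr = −r). Define T^r: A* → A by T^r(f) = Σ ⟨f,xᵢ⟩yᵢ. Then r is a solution of the GD Yang-Baxter equation, i.e. N(r) := r₁₃∘r₂₃ + r₁₂⋆r₂₃ + r₁₃∘r₁₂ = 0 and C(r) := [r₁₂,r₁₃] + [r₁₂,r₂₃] + [r₁₃,r₂₃] = 0, if and only if for all f,g ∈ A*: T^r(f)∘T^r(g) = T^r(L_⋆*(T^r(f))g) − T^r(R_∘*(T^r(g))f) and [T^r(f),T^r(g)]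 = T^r(ad*(T^r(f))g − ad*(T^r(g))f). -/
/-!
Over a field, a triple tensor vanishes iff its contraction with every pair of functionals `f, g`
in the first two slots vanishes. Contracting `N(r)` (resp. `C(r)`) with `f, g` gives exactly the
difference of the two sides of the operator identity for `T^r` at `f, g`: two of the three terms
contract directly, and the third (`r₁₃ ∘ r₁₂`, resp. `[r₁₂, r₁₃]`) does so once skew-symmetry of
`r` moves the pairing from an `x`-leg to a `y`-leg.
-/

open scoped TensorProduct

section Contraction

variable {R A B M : Type*} [CommSemiring R] [AddCommMonoid A] [Module R A]
  [AddCommMonoid B] [Module R B] [AddCommMonoid M] [Module R M]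

noncomputable def dualContractLeft (f : Module.Dual R A) : A ⊗[R] M →ₗ[R] M :=
  TensorProduct.lid R M ∘ₗ f.rTensor M

@[simp]
lemma dualContractLeft_tmul (f : Module.Dual R A) (a : A) (m : M) :
    dualContractLeft f (a ⊗ₜ[R] m) = f a • m := by
  simp [dualContractLeft]

lemma eq_zero_of_forall_dualContractLeft_eq_zero [Module.Free R A] {t : A ⊗[R] M}
    (h : ∀ f : Module.Dual R A, dualContractLeft f t = 0) : t = 0 := by
  let b := Module.Free.chooseBasis R A
  apply (TensorProduct.equivFinsuppOfBasisLeft b).injective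
  ext i
  rw [TensorProduct.equivFinsuppOfBasisLeft_apply, map_zero, Finsupp.zero_apply]
  exact h (b.coord i)

lemma eq_zero_iff_forall_dualContractLeft_dualContractLeft [Module.Free R A] [Module.Free R B]
    {t : A ⊗[R] (B ⊗[R] M)} :
    t = 0 ↔ ∀ (f : Module.Dual R A) (g : Module.Dual R B),
      dualContractLeft g (dualContractLeft f t) = 0 := by
  refine ⟨fun ht f g => by simp [ht], fun h => ?_⟩
  exact eq_zero_of_forall_dualContractLeft_eq_zero fun f =>
    eq_zero_of_forall_dualContractLeft_eq_zero (h f)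

end Contraction

section Sharp

variable {R A M ι : Type*} [CommSemiring R] [AddCommGroup A] [Module R A] [AddCommGroup M]
  [Module R M] [Fintype ι] (x y : ι → A)

-- The map `T^r` of the paper, for `r = ∑ i, x i ⊗ y i`.
noncomputable def sharp : Module.Dual R A →ₗ[R] A :=
  ∑ i, (Module.Dual.eval R A (x i)).smulRight (y i)

@[simp]
lemma sharp_apply (f : Module.Dual R A) : sharp x y f = ∑ i, f (x i) • y i := by
  simp [sharp]

lemma apply_sharp_sharp (B : A →ₗ[R] A →ₗ[R] M) (f g : Module.Dual R A) :
    B (sharp x y f) (sharp x y g) = ∑ i, ∑ j, f (x i) • g (x j) • B (y i) (y j) := by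
  simp only [sharp_apply, map_sum, map_smul, LinearMap.sum_apply, LinearMap.smul_apply,
    Finset.smul_sum]
  rw [Finset.sum_comm]
  exact Finset.sum_congr rfl fun i _ => Finset.sum_congr rfl fun j _ => smul_comm _ _ _

lemma sum_sum_smul_apply_eq_sharp (B : A →ₗ[R] A →ₗ[R] A) (f g : Module.Dual R A) :
    ∑ i, ∑ j, f (x i) • g (B (y i) (x j)) • y j = sharp x y (g ∘ₗ B (sharp x y f)) := by
  simp only [smul_smul, sharp_apply, map_sum, map_smul, LinearMap.coe_comp, LinearMap.coe_sum,
    LinearMap.coe_smul, Function.comp_apply, Finset.sum_apply, Pi.smul_apply, smul_eq_mul,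
    Finset.sum_smul]
  rw [Finset.sum_comm]

variable {x y}

lemma sum_apply_eq_neg_of_skew (hskew : ∑ i, x i ⊗ₜ[R] y i = -∑ i, y i ⊗ₜ[R] x i)
    (B : A →ₗ[R] A →ₗ[R] M) : ∑ i, B (x i) (y i) = -∑ i, B (y i) (x i) := by
  simpa using congrArg (TensorProduct.lift B) hskew

lemma sum_sum_smul_eq_neg_sharp (hskew : ∑ i, x i ⊗ₜ[R] y i = -∑ i, y i ⊗ₜ[R] x i)
    (B : A →ₗ[R] A →ₗ[R] A) (f g : Module.Dual R A) :
    ∑ i, ∑ j, f (B (x i) (x j)) • g (y j) • y i = -sharp x y (f ∘ₗ B.flip (sharp x y g)) := by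
  rw [sharp_apply, ← Finset.sum_neg_distrib]
  refine Finset.sum_congr rfl fun i _ => ?_
  have hswap := sum_apply_eq_neg_of_skew hskew ((f ∘ₗ B (x i)).smulRight (g.smulRight (y i)))
  simp only [LinearMap.smulRight_apply, LinearMap.comp_apply, LinearMap.smul_apply] at hswap
  rw [hswap]
  simp [Finset.sum_smul, smul_smul, mul_comm]

end Sharp

section YangBaxter

variable {R A ι : Type*} [CommRing R] [AddCommGroup A] [Module R A] [Fintype ι]

-- `N(r)` and `C(r)` of the paper.
def novikovYangBaxter (circ : A →ₗ[R] A →ₗ[R] A) (x y : ι → A) : A ⊗[R] (A ⊗[R] A) :=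
  ∑ i, ∑ j, x i ⊗ₜ[R] (x j ⊗ₜ[R] circ (y i) (y j))
    + ∑ i, ∑ j, x i ⊗ₜ[R] ((circ (y i) (x j) + circ (x j) (y i)) ⊗ₜ[R] y j)
    + ∑ i, ∑ j, circ (x i) (x j) ⊗ₜ[R] (y j ⊗ₜ[R] y i)

def classicalYangBaxter (br : A →ₗ[R] A →ₗ[R] A) (x y : ι → A) : A ⊗[R] (A ⊗[R] A) :=
  ∑ i, ∑ j, br (x i) (x j) ⊗ₜ[R] (y i ⊗ₜ[R] y j)
    + ∑ i, ∑ j, x i ⊗ₜ[R] (br (y i) (x j) ⊗ₜ[R] y j)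
    + ∑ i, ∑ j, x i ⊗ₜ[R] (x j ⊗ₜ[R] br (y i) (y j))

variable {x y : ι → A}

lemma dualContractLeft_novikovYangBaxter
    (hskew : ∑ i, x i ⊗ₜ[R] y i = -∑ i, y i ⊗ₜ[R] x i) (circ : A →ₗ[R] A →ₗ[R] A)
    (f g : Module.Dual R A) :
    dualContractLeft g (dualContractLeft f (novikovYangBaxter circ x y))
      = circ (sharp x y f) (sharp x y g)
        - (sharp x y (-(g ∘ₗ (circ (sharp x y f) + circ.flip (sharp x y f))))
          - sharp x y (-(f ∘ₗ circ.flip (sharp x y g)))) := by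
  have hstar := sum_sum_smul_apply_eq_sharp x y (circ + circ.flip) f g
  simp only [LinearMap.add_apply, LinearMap.flip_apply, map_add] at hstar
  simp only [novikovYangBaxter, map_add, map_sum, dualContractLeft_tmul, map_smul]
  rw [← apply_sharp_sharp, hstar, sum_sum_smul_eq_neg_sharp hskew, map_neg, map_neg]
  abel

lemma dualContractLeft_classicalYangBaxter
    (hskew : ∑ i, x i ⊗ₜ[R] y i = -∑ i, y i ⊗ₜ[R] x i) (br : A →ₗ[R] A →ₗ[R] A)
    (f g : Module.Dual R A) :
    dualContractLeft g (dualContractLeft f (classicalYangBaxter br x y))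
      = br (sharp x y f) (sharp x y g)
        - sharp x y (-(g ∘ₗ br (sharp x y f)) - -(f ∘ₗ br (sharp x y g))) := by
  have hswap := sum_sum_smul_eq_neg_sharp hskew br.flip f g
  simp only [LinearMap.flip_apply, LinearMap.flip_flip] at hswap
  rw [Finset.sum_comm] at hswap
  simp only [classicalYangBaxter, map_add, map_sum, dualContractLeft_tmul, map_smul]
  rw [hswap, sum_sum_smul_apply_eq_sharp, ← apply_sharp_sharp, map_sub, map_neg, map_neg]
  abel

end YangBaxter

theorem stmt13_general {k A ι : Type*} [Field k] [AddCommGroup A] [Module k A]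
    [Fintype ι]
    (circ br : A →ₗ[k] A →ₗ[k] A)
    (x y : ι → A)
    (hskew : (∑ i, x i ⊗ₜ[k] y i : A ⊗[k] A) = - ∑ i, y i ⊗ₜ[k] x i)
    (T : Module.Dual k A → A) (hT : ∀ f, T f = ∑ i, f (x i) • y i) :
    ((∑ i, ∑ j, x i ⊗ₜ[k] (x j ⊗ₜ[k] circ (y i) (y j))
        + ∑ i, ∑ j, x i ⊗ₜ[k] ((circ (y i) (x j) + circ (x j) (y i)) ⊗ₜ[k] y j)
        + ∑ i, ∑ j, circ (x i) (x j) ⊗ₜ[k] (y j ⊗ₜ[k] y i)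
        = (0 : A ⊗[k] (A ⊗[k] A))) ∧
     (∑ i, ∑ j, br (x i) (x j) ⊗ₜ[k] (y i ⊗ₜ[k] y j)
        + ∑ i, ∑ j, x i ⊗ₜ[k] (br (y i) (x j) ⊗ₜ[k] y j)
        + ∑ i, ∑ j, x i ⊗ₜ[k] (x j ⊗ₜ[k] br (y i) (y j))
        = (0 : A ⊗[k] (A ⊗[k] A))))
    ↔ (∀ f g : Module.Dual k A,
        (circ (T f) (T g)
          = T (-(g ∘ₗ (circ (T f) + circ.flip (T f)))) - T (-(f ∘ₗ circ.flip (T g)))) ∧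
        (br (T f) (T g)
          = T ((-(g ∘ₗ br (T f))) - (-(f ∘ₗ br (T g)))))) := by
  obtain rfl : T = sharp x y := funext fun f => (hT f).trans (sharp_apply x y f).symm
  change novikovYangBaxter circ x y = 0 ∧ classicalYangBaxter br x y = 0 ↔ _
  simp only [eq_zero_iff_forall_dualContractLeft_dualContractLeft,
    dualContractLeft_novikovYangBaxter hskew, dualContractLeft_classicalYangBaxter hskew,
    sub_eq_zero, forall_and]

theorem stmt13 {k A ι : Type*} [Field k] [AddCommGroup A] [Module k A]
    [FiniteDimensional k A] [Fintype ι]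
    (circ br : A →ₗ[k] A →ₗ[k] A)
    (hGD : IsGD (fun a b => circ a b) (fun a b => br a b))
    (x y : ι → A)
    (hskew : (∑ i, x i ⊗ₜ[k] y i : A ⊗[k] A) = - ∑ i, y i ⊗ₜ[k] x i)
    (T : Module.Dual k A → A) (hT : ∀ f, T f = ∑ i, f (x i) • y i) :
    ((∑ i, ∑ j, x i ⊗ₜ[k] (x j ⊗ₜ[k] circ (y i) (y j))
        + ∑ i, ∑ j, x i ⊗ₜ[k] ((circ (y i) (x j) + circ (x j) (y i)) ⊗ₜ[k] y j)
        + ∑ i, ∑ j, circ (x i) (x j) ⊗ₜ[k] (y j ⊗ₜ[k] y i)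
        = (0 : A ⊗[k] (A ⊗[k] A))) ∧
     (∑ i, ∑ j, br (x i) (x j) ⊗ₜ[k] (y i ⊗ₜ[k] y j)
        + ∑ i, ∑ j, x i ⊗ₜ[k] (br (y i) (x j) ⊗ₜ[k] y j)
        + ∑ i, ∑ j, x i ⊗ₜ[k] (x j ⊗ₜ[k] br (y i) (y j))
        = (0 : A ⊗[k] (A ⊗[k] A))))
    ↔ (∀ f g : Module.Dual k A,
        (circ (T f) (T g)
          = T (-(g ∘ₗ (circ (T f) + circ.flip (T f)))) - T (-(f ∘ₗ circ.flip (T g)))) ∧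
        (br (T f) (T g)
          = T ((-(g ∘ₗ br (T f))) - (-(f ∘ₗ br (T g)))))) :=
  stmt13_general circ br x y hskew T hT
end
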